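/- Let g = k ⊕ m be a Cartan decomposition of a Pauli dynamical Lie algebra and b_1, b_2, b_3 ∈ m pairwise commuting Pauli strings. If there exists a Pauli string d ∈ k that anticommutes with b_1, b_2, and b_3 simultaneously, then the product b_1 b_2 b_3 lies in m. -/

import Mathlib

open Matrix

noncomputable def pauli : Fin 4 → Matrix (Fin 2) (Fin 2) ℂ
  | 0 => 1
  | 1 => !![0, 1; 1, 0]
  | 2 => !![0, -Complex.I; Complex.I, 0]
  | 3 => !![1, 0; 0, -1]

noncomputable def PauliString (n : ℕ) (f : Fin n → Fin 4) :
    Matrix (Fin n → Fin 2) (Fin n → Fin 2) ℂ :=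
  fun v w => ∏ i, pauli (f i) (v i) (w i)

lemma pauli_sq (k : Fin 4) : pauli k * pauli k = 1 := by
  fin_cases k <;>
    · ext i j
      fin_cases i <;> fin_cases j <;>
        simp [pauli, Matrix.mul_apply, Fin.sum_univ_two, Complex.I_mul_I]

lemma pauliString_sq (n : ℕ) (f : Fin n → Fin 4) :
    PauliString n f * PauliString n f = 1 := by
  ext v w
  rw [Matrix.mul_apply]
  simp only [PauliString]
  calc ∑ u : Fin n → Fin 2, (∏ i, pauli (f i) (v i) (u i)) * ∏ i, pauli (f i) (u i) (w i)
      = ∑ u : Fin n → Fin 2, ∏ i, (pauli (f i) (v i) (u i) * pauli (f i) (u i) (w i)) := by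
        simp [Finset.prod_mul_distrib]
    _ = ∏ i, ∑ x : Fin 2, pauli (f i) (v i) x * pauli (f i) x (w i) := by
        rw [Finset.prod_univ_sum]; simp [Fintype.piFinset_univ]
    _ = ∏ i, (1 : Matrix (Fin 2) (Fin 2) ℂ) (v i) (w i) := by
        refine Finset.prod_congr rfl fun i _ => ?_
        rw [← Matrix.mul_apply, pauli_sq]
    _ = (1 : Matrix (Fin n → Fin 2) (Fin n → Fin 2) ℂ) v w := by
        simp only [Matrix.one_apply]
        by_cases h : v = w
        · simp [h]
        · obtain ⟨i, hi⟩ := Function.ne_iff.mp h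
          rw [if_neg h]
          exact Finset.prod_eq_zero (Finset.mem_univ i) (by simp [hi])

/-- In a ℂ-algebra, anticommuting elements with nonzero product have nonzero bracket. -/
lemma lie_ne_of_anticomm {R : Type*} [Ring R] [Module ℂ R] [SMulCommClass ℂ R R]
    {A B : R} (h : A * B = -(B * A)) (hne : A * B ≠ 0) : ⁅A, B⁆ ≠ 0 := by
  rw [Ring.lie_def]
  intro h0
  apply hne
  have hBA : A * B = B * A := sub_eq_zero.mp h0
  rw [hBA] at h
  have h2 : (2 : ℂ) • (B * A) = 0 := by rw [two_smul]; exact eq_neg_iff_add_eq_zero.mp h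
  rw [hBA]
  exact (smul_eq_zero.mp h2).resolve_left two_ne_zero

/-- if `x` anticommutes with `b` and `y` commutes with `b`, then `x*y` anticommutes with `b`. -/
lemma anti_mul {R : Type*} [Ring R] {x y b : R} (hx : x * b = -(b * x)) (hy : y * b = b * y) :
    (x * y) * b = -(b * (x * y)) := by
  rw [mul_assoc, hy, ← mul_assoc, hx, neg_mul, mul_assoc]

/-- **Theorem A6.**  For a Cartan decomposition `g = k ⊕ m` of a Pauli dynamical
Lie algebra (Pauli bases `Kb` of `k`, `Mb` of `m`), if `b₁, b₂, b₃ ∈ Mb` pairwise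
commute and some Pauli string `d ∈ Kb` anticommutes with all three, then the
product `b₁ b₂ b₃` lies in `m` (up to phase it is one of the basis strings `Mb`). -/
theorem triple_product_mem_m
    (n : ℕ) (Kb Mb : Finset (Matrix (Fin n → Fin 2) (Fin n → Fin 2) ℂ))
    (hPauli : ∀ P ∈ Kb ∪ Mb, ∃ f : Fin n → Fin 4, P = PauliString n f)
    (hKK : ∀ P ∈ Kb, ∀ Q ∈ Kb, ⁅P, Q⁆ ≠ 0 → ∃ R ∈ Kb, ∃ c : ℂ, c ≠ 0 ∧ P * Q = c • R)
    (hMM : ∀ P ∈ Mb, ∀ Q ∈ Mb, ⁅P, Q⁆ ≠ 0 → ∃ R ∈ Kb, ∃ c : ℂ, c ≠ 0 ∧ P * Q = c • R)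
    (hKM : ∀ P ∈ Kb, ∀ Q ∈ Mb, ⁅P, Q⁆ ≠ 0 → ∃ R ∈ Mb, ∃ c : ℂ, c ≠ 0 ∧ P * Q = c • R)
    (b₁ b₂ b₃ : Matrix (Fin n → Fin 2) (Fin n → Fin 2) ℂ)
    (hb₁ : b₁ ∈ Mb) (hb₂ : b₂ ∈ Mb) (hb₃ : b₃ ∈ Mb)
    (hc₁₂ : ⁅b₁, b₂⁆ = 0) (hc₁₃ : ⁅b₁, b₃⁆ = 0) (hc₂₃ : ⁅b₂, b₃⁆ = 0)
    (d : Matrix (Fin n → Fin 2) (Fin n → Fin 2) ℂ) (hd : d ∈ Kb)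
    (hd₁ : d * b₁ = -(b₁ * d)) (hd₂ : d * b₂ = -(b₂ * d)) (hd₃ : d * b₃ = -(b₃ * d)) :
    ∃ R ∈ Mb, ∃ c : ℂ, c ≠ 0 ∧ b₁ * b₂ * b₃ = c • R := by
  -- all four strings square to 1, hence are units
  have sq : ∀ P ∈ Kb ∪ Mb, P * P = 1 := fun P hP => by
    obtain ⟨f, rfl⟩ := hPauli P hP; exact pauliString_sq n f
  have hdd : d * d = 1 := sq d (Finset.mem_union_left _ hd)
  have ud : IsUnit d := ⟨⟨d, d, hdd, hdd⟩, rfl⟩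
  have h11 := sq b₁ (Finset.mem_union_right _ hb₁)
  have h22 := sq b₂ (Finset.mem_union_right _ hb₂)
  have h33 := sq b₃ (Finset.mem_union_right _ hb₃)
  have u1 : IsUnit b₁ := ⟨⟨b₁, b₁, h11, h11⟩, rfl⟩
  have u2 : IsUnit b₂ := ⟨⟨b₂, b₂, h22, h22⟩, rfl⟩
  have u3 : IsUnit b₃ := ⟨⟨b₃, b₃, h33, h33⟩, rfl⟩
  -- commutation facts
  have hb₁₂ : b₁ * b₂ = b₂ * b₁ := sub_eq_zero.mp hc₁₂
  have hb₁₃ : b₁ * b₃ = b₃ * b₁ := sub_eq_zero.mp hc₁₃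
  have hb₂₃ : b₂ * b₃ = b₃ * b₂ := sub_eq_zero.mp hc₂₃
  -- step 1 : d·b₁ ∈ m
  have ne₁ : d * b₁ ≠ 0 := (ud.mul u1).ne_zero
  obtain ⟨m₁, hm₁, c₁, hc₁, he₁⟩ := hKM d hd b₁ hb₁ (lie_ne_of_anticomm hd₁ ne₁)
  -- step 2 : (d·b₁)·b₂ ∈ k
  have hA₁ : (d * b₁) * b₂ = -(b₂ * (d * b₁)) := anti_mul hd₂ hb₁₂
  have ne₂ : (d * b₁) * b₂ ≠ 0 := ((ud.mul u1).mul u2).ne_zero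
  have hlm₁ : ⁅m₁, b₂⁆ ≠ 0 := by
    intro h0
    exact lie_ne_of_anticomm hA₁ ne₂ (by rw [he₁, Ring.lie_def, smul_mul_assoc, mul_smul_comm, ← smul_sub, ← Ring.lie_def, h0, smul_zero])
  obtain ⟨k₂, hk₂, c₂, hc₂, he₂⟩ := hMM m₁ hm₁ b₂ hb₂ hlm₁
  have hE₂ : (d * b₁) * b₂ = (c₁ * c₂) • k₂ := by
    rw [he₁, smul_mul_assoc, he₂, smul_smul]
  -- step 3 : ((d·b₁)·b₂)·b₃ ∈ m
  have hA₂ : ((d * b₁) * b₂) * b₃ = -(b₃ * ((d * b₁) * b₂)) :=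
    anti_mul (anti_mul hd₃ hb₁₃) hb₂₃
  have ne₃ : ((d * b₁) * b₂) * b₃ ≠ 0 := (((ud.mul u1).mul u2).mul u3).ne_zero
  have hlk₂ : ⁅k₂, b₃⁆ ≠ 0 := by
    intro h0
    exact lie_ne_of_anticomm hA₂ ne₃ (by rw [hE₂, Ring.lie_def, smul_mul_assoc, mul_smul_comm, ← smul_sub, ← Ring.lie_def, h0, smul_zero])
  obtain ⟨m₃, hm₃, c₃, hc₃, he₃⟩ := hKM k₂ hk₂ b₃ hb₃ hlk₂
  have hE₃ : d * (b₁ * b₂ * b₃) = (c₁ * c₂ * c₃) • m₃ := by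
    rw [← mul_assoc, ← mul_assoc, hE₂, smul_mul_assoc, he₃, smul_smul]
  -- step 4 : d anticommutes with b₁b₂b₃, so d·m₃ ∈ m finishes the proof
  have hcomm : d * (b₁ * b₂) = (b₁ * b₂) * d := by
    rw [← mul_assoc, hd₁, neg_mul, mul_assoc, hd₂, mul_neg, neg_neg, mul_assoc]
  have hantiB : d * (b₁ * b₂ * b₃) = -((b₁ * b₂ * b₃) * d) := by
    rw [← mul_assoc, hcomm, mul_assoc, hd₃, mul_neg, ← mul_assoc]
  have hBne : b₁ * b₂ * b₃ ≠ 0 := ((u1.mul u2).mul u3).ne_zero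
  have hldm₃ : ⁅d, m₃⁆ ≠ 0 := by
    intro h0
    apply hBne
    have hdm : d * m₃ = m₃ * d := sub_eq_zero.mp (by rw [← Ring.lie_def]; exact h0)
    have h1 : b₁ * b₂ * b₃ = -(b₁ * b₂ * b₃) := by
      calc b₁ * b₂ * b₃ = (d * d) * (b₁ * b₂ * b₃) := by rw [hdd, one_mul]
        _ = d * (d * (b₁ * b₂ * b₃)) := by rw [mul_assoc]
        _ = d * ((c₁ * c₂ * c₃) • m₃) := by rw [hE₃]
        _ = (c₁ * c₂ * c₃) • (d * m₃) := by rw [mul_smul_comm]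
        _ = (c₁ * c₂ * c₃) • (m₃ * d) := by rw [hdm]
        _ = ((c₁ * c₂ * c₃) • m₃) * d := by rw [smul_mul_assoc]
        _ = (d * (b₁ * b₂ * b₃)) * d := by rw [hE₃]
        _ = (-((b₁ * b₂ * b₃) * d)) * d := by rw [hantiB]
        _ = -((b₁ * b₂ * b₃) * (d * d)) := by rw [neg_mul, mul_assoc]
        _ = -(b₁ * b₂ * b₃) := by rw [hdd, mul_one]
    have h2 : (2 : ℂ) • (b₁ * b₂ * b₃) = 0 := by
      rw [two_smul]; exact eq_neg_iff_add_eq_zero.mp h1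
    exact (smul_eq_zero.mp h2).resolve_left two_ne_zero
  obtain ⟨m₄, hm₄, c₄, hc₄, he₄⟩ := hKM d hd m₃ hm₃ hldm₃
  refine ⟨m₄, hm₄, c₁ * c₂ * c₃ * c₄, mul_ne_zero (mul_ne_zero (mul_ne_zero hc₁ hc₂) hc₃) hc₄, ?_⟩
  calc b₁ * b₂ * b₃ = (d * d) * (b₁ * b₂ * b₃) := by rw [hdd, one_mul]
    _ = d * (d * (b₁ * b₂ * b₃)) := by rw [mul_assoc]
    _ = d * ((c₁ * c₂ * c₃) • m₃) := by rw [hE₃]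
    _ = (c₁ * c₂ * c₃) • (d * m₃) := by rw [mul_smul_comm]
    _ = (c₁ * c₂ * c₃) • (c₄ • m₄) := by rw [he₄]
    _ = (c₁ * c₂ * c₃ * c₄) • m₄ := by rw [smul_smul]
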